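/- A continuous linear operator T on H(ℂ) satisfies [T, d/dz] = aI if and only if T = M - a·z·I for some continuous linear operator M on H(ℂ) that commutes with d/dz. -/

import Mathlib

/-!
By the Leibniz rule `(z f)' = f + z f'`, multiplication by `z` satisfies `[z I, d/dz] = -I`.
Hence `[T + a z I, d/dz] = [T, d/dz] - a I`, so `[T, d/dz] = a I` exactly when
`M := T + a z I` commutes with `d/dz`.
-/

open Complex

lemma Differentiable.entire_deriv {f : ℂ → ℂ} (hf : Differentiable ℂ f) :
    Differentiable ℂ (_root_.deriv f) := by
  rw [← analyticOnNhd_univ_iff_differentiable] at hf ⊢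
  exact hf.deriv

/-- The space `H(ℂ)` of entire functions, as a submodule of `C(ℂ, ℂ)` with the
compact-open topology (uniform convergence on compacts). -/
noncomputable def Entire : Submodule ℂ C(ℂ, ℂ) where
  carrier := {f | Differentiable ℂ f}
  add_mem' := fun hf hg => by simpa using hf.add hg
  zero_mem' := by
    show Differentiable ℂ ⇑(0 : C(ℂ, ℂ))
    rw [ContinuousMap.coe_zero]
    exact differentiable_const 0
  smul_mem' := fun c f hf => by simpa using hf.const_smul c

lemma Entire.diff (f : Entire) : Differentiable ℂ ⇑(f : C(ℂ, ℂ)) := f.2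

/-- Differentiation `d/dz` on entire functions. -/
noncomputable def derivE (f : Entire) : Entire :=
  ⟨⟨deriv ⇑(f : C(ℂ, ℂ)), (Entire.diff f).entire_deriv.continuous⟩,
    (Entire.diff f).entire_deriv⟩

/-- The translation operator `S_λ` on entire functions. -/
noncomputable def translE (lam : ℂ) (f : Entire) : Entire :=
  ⟨⟨fun z => (f : C(ℂ, ℂ)) (z + lam), by fun_prop⟩, (Entire.diff f).comp (by fun_prop)⟩

/-- Multiplication by `z` on entire functions. -/
noncomputable def zmulE (f : Entire) : Entire :=
  ⟨⟨fun z => z * (f : C(ℂ, ℂ)) z, continuous_id.mul (Entire.diff f).continuous⟩,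
    differentiable_id.mul (Entire.diff f)⟩

@[ext]
lemma Entire.ext {f g : Entire} (h : ∀ z, (f : C(ℂ, ℂ)) z = (g : C(ℂ, ℂ)) z) : f = g :=
  Subtype.ext (ContinuousMap.ext h)

lemma derivE_add (f g : Entire) : derivE (f + g) = derivE f + derivE g := by
  ext z
  exact deriv_add (Entire.diff f z) (Entire.diff g z)

lemma derivE_smul (c : ℂ) (f : Entire) : derivE (c • f) = c • derivE f := by
  ext z
  exact deriv_const_smul c (Entire.diff f z)

lemma derivE_zmulE (f : Entire) : derivE (zmulE f) = f + zmulE (derivE f) := by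
  ext z
  change deriv (fun y => y * (f : C(ℂ, ℂ)) y) z = (f : C(ℂ, ℂ)) z + z * deriv (f : C(ℂ, ℂ)) z
  rw [deriv_fun_mul differentiableAt_fun_id (Entire.diff f z), deriv_id'', one_mul]

-- Instance search misses this: the addition carried by `Submodule.topologicalAddGroup` is not
-- reducibly defeq to the submodule's own.
instance : ContinuousAdd Entire := inferInstanceAs (ContinuousAdd Entire.toAddSubgroup)

noncomputable def zmulCLM : Entire →L[ℂ] Entire where
  toFun := zmulE
  map_add' f g := by ext z; exact mul_add _ _ _
  map_smul' c f := by ext z; exact mul_left_comm _ _ _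
  cont := continuous_induced_rng.2 <|
    (continuous_const.mul continuous_subtype_val :
      Continuous fun f : Entire => ContinuousMap.id ℂ * (f : C(ℂ, ℂ)))

@[simp]
lemma zmulCLM_apply (f : Entire) : zmulCLM f = zmulE f := rfl

lemma commutator_derivE_add_smul_zmulCLM (a : ℂ) (T : Entire →L[ℂ] Entire) (f : Entire) :
    (T + a • zmulCLM) (derivE f) - derivE ((T + a • zmulCLM) f)
      = T (derivE f) - derivE (T f) - a • f := by
  simp only [add_apply, smul_apply, zmulCLM_apply, derivE_add, derivE_smul, derivE_zmulE]
  module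

/-- A continuous linear operator `T` on `H(ℂ)` satisfies `[T, d/dz] = a • I` iff
`T = M - a z I` for some continuous linear operator `M` commuting with `d/dz`. -/
theorem stmt_2 (a : ℂ) (T : Entire →L[ℂ] Entire) :
    (∀ f : Entire, T (derivE f) - derivE (T f) = a • f)
      ↔ ∃ M : Entire →L[ℂ] Entire,
          (∀ f : Entire, M (derivE f) = derivE (M f))
            ∧ ∀ f : Entire, T f = M f - a • zmulE f := by
  constructor
  · intro hT
    refine ⟨T + a • zmulCLM, fun f => ?_, fun f => ?_⟩
    · exact sub_eq_zero.1 <|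
        (commutator_derivE_add_smul_zmulCLM a T f).trans (sub_eq_zero.2 (hT f))
    · simp only [add_apply, smul_apply, zmulCLM_apply]
      abel
  · rintro ⟨M, hM, hTM⟩ f
    have hMT : M = T + a • zmulCLM := by
      ext1 g
      simp only [add_apply, smul_apply, zmulCLM_apply, hTM]
      abel
    subst hMT
    exact sub_eq_zero.1 <|
      (commutator_derivE_add_smul_zmulCLM a T f).symm.trans (sub_eq_zero.2 (hM f))
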